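/- arXiv:2205.14885 — 5 statements merged into one kernel-verified Lean document; each statement's English description precedes it below -/
import Mathlib

section
/- Let α < β be real numbers, let η ≥ 0 be an integer, and let c_0, …, c_η be real numbers satisfying c_ℓ ≤ c_{ℓ+1} for all 0 ≤ ℓ < η. Then the polynomial φ(x) = Σ_{ℓ=0}^{η} c_ℓ · b_ℓ^{η,[α,β]}(x) is monotone nondecreasing on the interval [α, β]. -/
/-!
On `[α, β]` the Bernstein basis is the standard one, `bernsteinPolynomial`, composed with the
increasing affine map `x ↦ (x - α) / (β - α)` onto `[0, 1]`, so it suffices to treat `[0, 1]`.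
There the derivative of `∑ cₗ Bₗⁿ⁺¹` is `(n + 1) ∑ (cₗ₊₁ - cₗ) Bₗⁿ`, which is nonnegative
because the basis polynomials are nonnegative on `[0, 1]` and the coefficients increase.
-/

noncomputable def bern (η ℓ : ℕ) (α β x : ℝ) : ℝ :=
  (η.choose ℓ : ℝ) / (β - α) ^ η * (β - x) ^ (η - ℓ) * (x - α) ^ ℓ

open Polynomial Finset

namespace bernsteinPolynomial

theorem derivative_sum_smul {R : Type*} [CommRing R] (n : ℕ) (c : ℕ → R) :
    derivative (∑ ℓ ∈ range (n + 2), c ℓ • bernsteinPolynomial R (n + 1) ℓ) =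
      (n + 1 : R[X]) * ∑ ℓ ∈ range (n + 1), (c (ℓ + 1) - c ℓ) • bernsteinPolynomial R n ℓ := by
  have hshift : ∑ ℓ ∈ range (n + 1), c ℓ • bernsteinPolynomial R n ℓ =
      ∑ ℓ ∈ range (n + 1), c (ℓ + 1) • bernsteinPolynomial R n (ℓ + 1) +
        c 0 • bernsteinPolynomial R n 0 := by
    rw [← sum_range_succ' (fun ℓ => c ℓ • bernsteinPolynomial R n ℓ), sum_range_succ _ (n + 1),
      eq_zero_of_lt R n.lt_succ_self, smul_zero, add_zero]
  calc derivative (∑ ℓ ∈ range (n + 2), c ℓ • bernsteinPolynomial R (n + 1) ℓ)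
      = ∑ ℓ ∈ range (n + 1), c (ℓ + 1) • derivative (bernsteinPolynomial R (n + 1) (ℓ + 1)) +
          c 0 • derivative (bernsteinPolynomial R (n + 1) 0) := by
        simp only [sum_range_succ' _ (n + 1), derivative_add, derivative_sum, derivative_smul]
    _ = (n + 1 : R[X]) * (∑ ℓ ∈ range (n + 1), c (ℓ + 1) • bernsteinPolynomial R n ℓ -
          (∑ ℓ ∈ range (n + 1), c (ℓ + 1) • bernsteinPolynomial R n (ℓ + 1) +
            c 0 • bernsteinPolynomial R n 0)) := by
        simp only [derivative_succ, derivative_zero, add_tsub_cancel_right, mul_smul_comm,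
          smul_sub, sum_sub_distrib, mul_sub, mul_add, mul_sum, smul_neg, neg_mul]
        push_cast
        ring
    _ = _ := by simp only [← hshift, ← sum_sub_distrib, sub_smul]

theorem eval_nonneg {n ℓ : ℕ} {t : ℝ} (ht : t ∈ Set.Icc (0 : ℝ) 1) :
    0 ≤ (bernsteinPolynomial ℝ n ℓ).eval t := by
  have h1t : 0 ≤ 1 - t := sub_nonneg.2 ht.2
  simp only [bernsteinPolynomial, eval_mul, eval_pow, eval_natCast, eval_X, eval_sub, eval_one]
  positivity [ht.1]

theorem monotoneOn_eval_sum_smul {n : ℕ} {c : ℕ → ℝ} (hc : ∀ ℓ < n, c ℓ ≤ c (ℓ + 1)) :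
    MonotoneOn (fun t => (∑ ℓ ∈ range (n + 1), c ℓ • bernsteinPolynomial ℝ n ℓ).eval t)
      (Set.Icc 0 1) := by
  cases n with
  | zero => simp [bernsteinPolynomial, monotoneOn_const]
  | succ n =>
    set p := ∑ ℓ ∈ range (n + 2), c ℓ • bernsteinPolynomial ℝ (n + 1) ℓ
    refine monotoneOn_of_deriv_nonneg (convex_Icc 0 1) p.continuousOn p.differentiableOn ?_
    intro t ht
    rw [interior_Icc] at ht
    rw [Polynomial.deriv, derivative_sum_smul, eval_mul, eval_finsetSum]
    refine mul_nonneg (by simp only [eval_add, eval_natCast, eval_one]; positivity)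
      (sum_nonneg fun ℓ hℓ => ?_)
    rw [eval_smul, smul_eq_mul]
    exact mul_nonneg (sub_nonneg.2 (hc ℓ (by simpa using hℓ)))
      (eval_nonneg (Set.Ioo_subset_Icc_self ht))

end bernsteinPolynomial

theorem bern_eq_eval_bernsteinPolynomial {α β : ℝ} (h : α ≠ β) (η ℓ : ℕ) (x : ℝ) :
    bern η ℓ α β x = (bernsteinPolynomial ℝ η ℓ).eval ((x - α) / (β - α)) := by
  have hβα : β - α ≠ 0 := sub_ne_zero.2 h.symm
  rcases le_or_gt ℓ η with hℓ | hℓ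
  · obtain ⟨k, rfl⟩ := Nat.exists_eq_add_of_le hℓ
    have h1 : 1 - (x - α) / (β - α) = (β - x) / (β - α) := by field_simp; ring
    simp only [bernsteinPolynomial, eval_mul, eval_pow, eval_natCast, eval_X, eval_sub, eval_one,
      h1, bern, div_pow, Nat.add_sub_cancel_left]
    field_simp
    ring
  · simp [bern, bernsteinPolynomial.eq_zero_of_lt ℝ hℓ, Nat.choose_eq_zero_of_lt hℓ]

/-- A coefficient monotone increasing Bernstein polynomial is monotone nondecreasing
on its reference interval. -/
theorem bernstein_coeff_monotone (α β : ℝ) (hαβ : α < β) (η : ℕ) (c : ℕ → ℝ)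
    (hc : ∀ ℓ < η, c ℓ ≤ c (ℓ + 1)) :
    MonotoneOn (fun x => ∑ ℓ ∈ Finset.range (η + 1), c ℓ * bern η ℓ α β x)
      (Set.Icc α β) := by
  have hβα : 0 < β - α := sub_pos.2 hαβ
  have hφ : (fun x => ∑ ℓ ∈ range (η + 1), c ℓ * bern η ℓ α β x) =
      (fun t => (∑ ℓ ∈ range (η + 1), c ℓ • bernsteinPolynomial ℝ η ℓ).eval t) ∘
        (fun x => (x - α) / (β - α)) := by
    ext x
    simp [eval_finsetSum, bern_eq_eval_bernsteinPolynomial hαβ.ne]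
  have hmono : Monotone fun x : ℝ => (x - α) / (β - α) := fun x y hxy => by
    dsimp only
    gcongr
  have hmaps : Set.MapsTo (fun x : ℝ => (x - α) / (β - α)) (Set.Icc α β) (Set.Icc 0 1) :=
    fun x hx => ⟨div_nonneg (sub_nonneg.2 hx.1) hβα.le,
      (div_le_one hβα).2 (sub_le_sub_right hx.2 α)⟩
  rw [hφ]
  exact (bernsteinPolynomial.monotoneOn_eval_sum_smul hc).comp (hmono.monotoneOn _) hmaps
end

section
/- Let d ≥ 1, let n = (n_1,…,n_d) be nonnegative integer degrees, let U = [α_1,β_1] × ⋯ × [α_d,β_d] with α_j < β_j for each j, and let c : Π_j {0,…,n_j} → ℝ. Suppose φ(x) = Σ_i c_i · Π_{j=1}^{d} b_{i_j}^{n_j,[α_j,β_j]}(x_j) is coefficient monotone increasing in direction k, i.e., c_i ≤ c_{i+e_k} for all multi-indices i with i_k < n_k. Then φ is nondecreasing in the k-th coordinate on U: for every x ∈ U and every α_k ≤ s ≤ t ≤ β_k, φ(x with k-th coordinate replaced by s) ≤ φ(x with k-th coordinate replaced by t). -/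
open Finset

section Homogeneous

variable {R : Type*} [CommSemiring R]

def homBernstein (C : ℕ → R) (η : ℕ) (x y : R) : R :=
  ∑ ij ∈ antidiagonal η, C ij.1 * η.choose ij.1 * x ^ ij.1 * y ^ ij.2

theorem homBernstein_succ (C : ℕ → R) (η : ℕ) (x y : R) :
    homBernstein C (η + 1) x y =
      x * homBernstein (fun ℓ ↦ C (ℓ + 1)) η x y + y * homBernstein C η x y := by
  -- `G` is expanded once from each end of the antidiagonal
  set G := ∑ ij ∈ antidiagonal (η + 1), C ij.1 * η.choose ij.1 * x ^ ij.1 * y ^ ij.2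
  have hG₀ : G = C 0 * y ^ (η + 1) +
      ∑ ij ∈ antidiagonal η, C (ij.1 + 1) * η.choose (ij.1 + 1) * x ^ (ij.1 + 1) * y ^ ij.2 := by
    simp [G, Nat.sum_antidiagonal_succ]
  have hG₁ : G = y * homBernstein C η x y := by
    simp only [G, homBernstein, Nat.sum_antidiagonal_succ', mul_sum, Nat.choose_succ_self,
      Nat.cast_zero, mul_zero, zero_mul, zero_add]
    exact sum_congr rfl fun ij _ ↦ by ring
  have hsplit : homBernstein C (η + 1) x y =
      ∑ ij ∈ antidiagonal η, C (ij.1 + 1) * η.choose ij.1 * x ^ (ij.1 + 1) * y ^ ij.2 + G := by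
    simp only [hG₀, homBernstein, Nat.sum_antidiagonal_succ, Nat.choose_succ_succ, Nat.cast_add,
      mul_add, add_mul, sum_add_distrib, Nat.choose_zero_right, pow_zero]
    ring
  rw [hsplit, hG₁]
  congr 1
  simp only [homBernstein, mul_sum]
  exact sum_congr rfl fun ij _ ↦ by ring

variable [PartialOrder R] [IsOrderedRing R]

theorem homBernstein_le_homBernstein {C D : ℕ → R} {η : ℕ} (hCD : ∀ ℓ ≤ η, C ℓ ≤ D ℓ)
    {x y : R} (hx : 0 ≤ x) (hy : 0 ≤ y) : homBernstein C η x y ≤ homBernstein D η x y := by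
  refine sum_le_sum fun ij hij ↦ ?_
  have := hCD ij.1 (HasAntidiagonal.antidiagonal.fst_le hij)
  gcongr

theorem homBernstein_le_shift {η : ℕ} {C : ℕ → R} (hC : ∀ ℓ < η, C ℓ ≤ C (ℓ + 1))
    {p q r : R} (hp : 0 ≤ p) (hq : 0 ≤ q) (hr : 0 ≤ r) :
    homBernstein C η p (q + r) ≤ homBernstein C η (p + q) r := by
  induction η generalizing C with
  | zero => simp [homBernstein]
  | succ η ih =>
    have hC' : ∀ ℓ < η, C (ℓ + 1) ≤ C (ℓ + 1 + 1) := fun ℓ hℓ ↦ hC (ℓ + 1) (by omega)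
    have hshift : homBernstein C η (p + q) r ≤ homBernstein (fun ℓ ↦ C (ℓ + 1)) η (p + q) r :=
      homBernstein_le_homBernstein (fun ℓ hℓ ↦ hC ℓ (by omega)) (add_nonneg hp hq) hr
    rw [homBernstein_succ, homBernstein_succ]
    calc p * homBernstein (fun ℓ ↦ C (ℓ + 1)) η p (q + r) + (q + r) * homBernstein C η p (q + r)
        ≤ p * homBernstein (fun ℓ ↦ C (ℓ + 1)) η (p + q) r
            + (q + r) * homBernstein C η (p + q) r := by
          gcongr
          · exact ih hC'
          · exact ih fun ℓ hℓ ↦ hC ℓ (by omega)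
      _ = p * homBernstein (fun ℓ ↦ C (ℓ + 1)) η (p + q) r
            + q * homBernstein C η (p + q) r + r * homBernstein C η (p + q) r := by ring
      _ ≤ p * homBernstein (fun ℓ ↦ C (ℓ + 1)) η (p + q) r
            + q * homBernstein (fun ℓ ↦ C (ℓ + 1)) η (p + q) r
            + r * homBernstein C η (p + q) r := by gcongr
      _ = _ := by ring

end Homogeneous

theorem sum_mul_bern_eq (C : ℕ → ℝ) (η : ℕ) (α β x : ℝ) :
    ∑ ℓ ∈ range (η + 1), C ℓ * bern η ℓ α β x =
      homBernstein C η (x - α) (β - x) / (β - α) ^ η := by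
  rw [homBernstein, Nat.sum_antidiagonal_eq_sum_range_succ_mk, sum_div]
  refine sum_congr rfl fun ℓ _ ↦ ?_
  simp only [bern]
  ring

theorem monotoneOn_sum_mul_bern {η : ℕ} {C : ℕ → ℝ} (hC : ∀ ℓ < η, C ℓ ≤ C (ℓ + 1)) (α β : ℝ) :
    MonotoneOn (fun x ↦ ∑ ℓ ∈ range (η + 1), C ℓ * bern η ℓ α β x) (Set.Icc α β) := by
  intro s hs t ht hst
  simp only [sum_mul_bern_eq]
  have hβs : β - s = (t - s) + (β - t) := by ring
  have htα : t - α = (s - α) + (t - s) := by ring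
  rw [hβs, htα]
  have hαβ : 0 ≤ β - α := sub_nonneg.2 (hs.1.trans hs.2)
  exact div_le_div_of_nonneg_right (homBernstein_le_shift hC (sub_nonneg.2 hs.1)
    (sub_nonneg.2 hst) (sub_nonneg.2 ht.2)) (pow_nonneg hαβ η)

theorem bern_nonneg {η ℓ : ℕ} {α β x : ℝ} (hx : x ∈ Set.Icc α β) : 0 ≤ bern η ℓ α β x := by
  have hα := sub_nonneg.2 hx.1
  have hβ := sub_nonneg.2 hx.2
  have hαβ := sub_nonneg.2 (hx.1.trans hx.2)
  unfold bern
  positivity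

section Slice

variable {ι R X : Type*} [Fintype ι] [DecidableEq ι] [CommSemiring R]

def sliceCoeff (n : ι → ℕ) (c : (ι → ℕ) → R) (b : ι → ℕ → X → R) (x : ι → X) (k : ι)
    (ℓ : ℕ) : R :=
  ∑ i ∈ Iic n with i k = ℓ, c i * ∏ j ∈ univ.erase k, b j (i j) (x j)

theorem sum_mul_prod_update_eq (n : ι → ℕ) (c : (ι → ℕ) → R) (b : ι → ℕ → X → R) (x : ι → X)
    (k : ι) (u : X) :
    ∑ i ∈ Iic n, c i * ∏ j, b j (i j) (Function.update x k u j) =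
      ∑ ℓ ∈ range (n k + 1), sliceCoeff n c b x k ℓ * b k ℓ u := by
  have hmaps : ∀ i ∈ Iic n, i k ∈ range (n k + 1) := fun i hi ↦
    mem_range_succ_iff.2 (mem_Iic.1 hi k)
  rw [← sum_fiberwise_of_maps_to hmaps]
  refine sum_congr rfl fun ℓ _ ↦ ?_
  rw [sliceCoeff, sum_mul]
  refine sum_congr rfl fun i hi ↦ ?_
  rw [← mul_prod_erase univ _ (mem_univ k), Function.update_self, (mem_filter.1 hi).2]
  have hrest : ∏ j ∈ univ.erase k, b j (i j) (Function.update x k u j) =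
      ∏ j ∈ univ.erase k, b j (i j) (x j) :=
    prod_congr rfl fun j hj ↦ by rw [Function.update_of_ne (ne_of_mem_erase hj)]
  rw [hrest]
  ring

theorem sum_filter_succ_eq_sum_add_single {M : Type*} [AddCommMonoid M] (n : ι → ℕ)
    (f : (ι → ℕ) → M) {k : ι} {ℓ : ℕ} (hℓ : ℓ < n k) :
    ∑ i ∈ Iic n with i k = ℓ + 1, f i = ∑ i ∈ Iic n with i k = ℓ, f (i + Pi.single k 1) := by
  symm
  refine sum_nbij' (· + Pi.single k 1) (· - Pi.single k 1) ?_ ?_ ?_ ?_ fun _ _ ↦ rfl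
  all_goals
    intro i hi
    simp only [mem_filter, mem_Iic, Pi.le_def] at hi
    obtain ⟨hle, hk⟩ := hi
  · refine mem_filter.2 ⟨mem_Iic.2 fun j ↦ ?_, by simp [hk]⟩
    rcases eq_or_ne j k with rfl | hj
    · simpa [hk] using hℓ
    · simpa [hj] using hle j
  · exact mem_filter.2 ⟨mem_Iic.2 fun j ↦ (Nat.sub_le _ _).trans (hle j), by simp [hk]⟩
  · simp
  · ext j
    rcases eq_or_ne j k with rfl | hj
    · simp [hk]
    · simp [hj]

theorem sliceCoeff_le_succ [PartialOrder R] [IsOrderedRing R] {n : ι → ℕ} {c : (ι → ℕ) → R}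
    {b : ι → ℕ → X → R} {x : ι → X} {k : ι}
    (hc : ∀ i ∈ Iic n, i k < n k → c i ≤ c (i + Pi.single k 1))
    (hb : ∀ j ≠ k, ∀ m, 0 ≤ b j m (x j)) {ℓ : ℕ} (hℓ : ℓ < n k) :
    sliceCoeff n c b x k ℓ ≤ sliceCoeff n c b x k (ℓ + 1) := by
  rw [sliceCoeff, sliceCoeff, sum_filter_succ_eq_sum_add_single n _ hℓ]
  refine sum_le_sum fun i hi ↦ ?_
  obtain ⟨hin, hik⟩ := mem_filter.1 hi
  have hrest : ∏ j ∈ univ.erase k, b j ((i + Pi.single k 1 : ι → ℕ) j) (x j) =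
      ∏ j ∈ univ.erase k, b j (i j) (x j) :=
    prod_congr rfl fun j hj ↦ by simp [ne_of_mem_erase hj]
  rw [hrest]
  exact mul_le_mul_of_nonneg_right (hc i hin (hik ▸ hℓ))
    (prod_nonneg fun j hj ↦ hb j (ne_of_mem_erase hj) _)

end Slice

theorem tensor_bernstein_coeff_monotone_general (d : ℕ) (n : Fin d → ℕ)
    (α β : Fin d → ℝ)
    (c : (Fin d → ℕ) → ℝ) (φ : (Fin d → ℝ) → ℝ)
    (hφ : ∀ x, φ x = ∑ i ∈ Finset.Iic n, c i * ∏ j, bern (n j) (i j) (α j) (β j) (x j))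
    (k : Fin d) (e : Fin d → ℕ) (he : e = fun j => if j = k then 1 else 0)
    (hc : ∀ i ∈ Finset.Iic n, i k < n k → c i ≤ c (i + e)) :
    ∀ x : Fin d → ℝ, (∀ j, x j ∈ Set.Icc (α j) (β j)) →
      ∀ s t : ℝ, α k ≤ s → s ≤ t → t ≤ β k →
        φ (Function.update x k s) ≤ φ (Function.update x k t) := by
  intro x hx s t hs hst ht
  obtain rfl : e = Pi.single k 1 := he ▸ funext fun j ↦ (Pi.single_apply k 1 j).symm
  have hC (ℓ : ℕ) (hℓ : ℓ < n k) := sliceCoeff_le_succ (b := fun j m ↦ bern (n j) m (α j) (β j))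
    hc (fun j _ _ ↦ bern_nonneg (hx j)) hℓ
  simp only [hφ, sum_mul_prod_update_eq n c (fun j m ↦ bern (n j) m (α j) (β j))]
  exact monotoneOn_sum_mul_bern hC (α k) (β k) ⟨hs, hst.trans ht⟩ ⟨hs.trans hst, ht⟩ hst

/-- A tensor-product Bernstein polynomial that is coefficient monotone increasing in
direction `k` is nondecreasing in the `k`-th coordinate on the reference box. -/
theorem tensor_bernstein_coeff_monotone (d : ℕ) (hd : 1 ≤ d) (n : Fin d → ℕ)
    (α β : Fin d → ℝ) (hαβ : ∀ j, α j < β j)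
    (c : (Fin d → ℕ) → ℝ) (φ : (Fin d → ℝ) → ℝ)
    (hφ : ∀ x, φ x = ∑ i ∈ Finset.Iic n, c i * ∏ j, bern (n j) (i j) (α j) (β j) (x j))
    (k : Fin d) (e : Fin d → ℕ) (he : e = fun j => if j = k then 1 else 0)
    (hc : ∀ i ∈ Finset.Iic n, i k < n k → c i ≤ c (i + e)) :
    ∀ x : Fin d → ℝ, (∀ j, x j ∈ Set.Icc (α j) (β j)) →
      ∀ s t : ℝ, α k ≤ s → s ≤ t → t ≤ β k →
        φ (Function.update x k s) ≤ φ (Function.update x k t) :=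
  tensor_bernstein_coeff_monotone_general d n α β c φ hφ k e he hc
end

section
/- Let U = [α_1,β_1] × ⋯ × [α_d,β_d] be a closed box in ℝ^d, let k be a coordinate direction, and let f : ℝ^d → ℝ be nondecreasing in the k-th coordinate on U. Let F = {x ∈ U : x_k = β_k} be the upper face. Suppose any two points of F ∩ {f > 0} are joined by a path lying in F ∩ {f > 0}. Then any two points of U ∩ {f > 0} are joined by a path lying in U ∩ {f > 0}; that is, U ∩ {f > 0} has at most one path component. -/
/-- If `f` is nondecreasing in the `k`-th coordinate on a closed box `U` and the positive
region of the upper face is path-connected, then `U ∩ {f > 0}` has at most one path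
component. -/
theorem monotone_direction_positive_region_connected (d : ℕ) (α β : Fin d → ℝ) (k : Fin d)
    (U : Set (Fin d → ℝ)) (hU : U = {x | ∀ j, x j ∈ Set.Icc (α j) (β j)})
    (f : (Fin d → ℝ) → ℝ)
    (hf : ∀ x ∈ U, ∀ s t : ℝ, α k ≤ s → s ≤ t → t ≤ β k →
      f (Function.update x k s) ≤ f (Function.update x k t))
    (F : Set (Fin d → ℝ)) (hF : F = {x ∈ U | x k = β k})
    (hface : ∀ x ∈ F ∩ {y | 0 < f y}, ∀ y ∈ F ∩ {y | 0 < f y},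
      JoinedIn (F ∩ {z | 0 < f z}) x y) :
    ∀ x ∈ U ∩ {y | 0 < f y}, ∀ y ∈ U ∩ {y | 0 < f y},
      JoinedIn (U ∩ {z | 0 < f z}) x y := by
  -- key lemma: each point is joined to its projection to the upper face
  have key : ∀ x ∈ U ∩ {y | 0 < f y},
      JoinedIn (U ∩ {z | 0 < f z}) x (Function.update x k (β k)) ∧
      Function.update x k (β k) ∈ F ∩ {y | 0 < f y} := by
    rintro x ⟨hxU, hxf⟩
    have hxk : x k ∈ Set.Icc (α k) (β k) := by
      rw [hU] at hxU; exact hxU k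
    -- membership of each intermediate point
    have hmem : ∀ s : ℝ, x k ≤ s → s ≤ β k →
        Function.update x k s ∈ U ∩ {z | 0 < f z} := by
      intro s hs1 hs2
      have hsU : Function.update x k s ∈ U := by
        rw [hU]
        intro j
        by_cases h : j = k
        · subst h; simp [Function.update_self]
          exact ⟨le_trans hxk.1 hs1, hs2⟩
        · rw [Function.update_of_ne h]
          rw [hU] at hxU; exact hxU j
      refine ⟨hsU, ?_⟩
      have h1 : f (Function.update x k (x k)) ≤ f (Function.update x k s) :=
        hf x hxU (x k) s hxk.1 hs1 hs2
      rw [Function.update_eq_self] at h1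
      exact lt_of_lt_of_le hxf h1
    have hmemF : Function.update x k (β k) ∈ F ∩ {y | 0 < f y} := by
      have := hmem (β k) hxk.2 le_rfl
      refine ⟨?_, this.2⟩
      rw [hF]
      exact ⟨this.1, Function.update_self k (β k) x⟩
    refine ⟨?_, hmemF⟩
    -- the path
    let γ : Path x (Function.update x k (β k)) :=
      { toFun := fun t => Function.update x k ((1 - (t : ℝ)) * x k + (t : ℝ) * β k)
        continuous_toFun := continuous_const.update k
          (((continuous_const.sub continuous_subtype_val).mul continuous_const).add
            (continuous_subtype_val.mul continuous_const))
        source' := by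
          norm_num
        target' := by
          norm_num }
    refine ⟨γ, ?_⟩
    intro t
    have ht : (0:ℝ) ≤ (t : ℝ) ∧ (t : ℝ) ≤ 1 := ⟨t.2.1, t.2.2⟩
    set s : ℝ := (1 - (t : ℝ)) * x k + (t : ℝ) * β k with hs
    have hxs : x k ≤ s := by
      have := hxk.2
      nlinarith [ht.1, ht.2]
    have hsb : s ≤ β k := by
      have := hxk.2
      nlinarith [ht.1, ht.2]
    exact hmem s hxs hsb
  rintro x hx y hy
  obtain ⟨hjx, hx'⟩ := key x hx
  obtain ⟨hjy, hy'⟩ := key y hy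
  have hFsub : F ∩ {z | 0 < f z} ⊆ U ∩ {z | 0 < f z} := by
    rw [hF]; rintro z ⟨⟨hz1, _⟩, hz2⟩; exact ⟨hz1, hz2⟩
  have hmid := (hface _ hx' _ hy').mono hFsub
  exact (hjx.trans hmid).trans hjy.symm
end

section
/- Let U = [α_1,β_1] × ⋯ × [α_d,β_d] be a closed box in ℝ^d, let k be a coordinate direction, and let f : ℝ^d → ℝ be nondecreasing in the k-th coordinate on U. Let F = {x ∈ U : x_k = α_k} be the lower face. Suppose any two points of F ∩ {f < 0} are joined by a path lying in F ∩ {f < 0}. Then any two points of U ∩ {f < 0} are joined by a path lying in U ∩ {f < 0}; that is, U ∩ {f < 0} has at most one path component. -/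
/-- If `f` is nondecreasing in the `k`-th coordinate on a closed box `U` and the negative
region of the lower face is path-connected, then `U ∩ {f < 0}` has at most one path
component. -/
theorem monotone_direction_negative_region_connected (d : ℕ) (α β : Fin d → ℝ) (k : Fin d)
    (U : Set (Fin d → ℝ)) (hU : U = {x | ∀ j, x j ∈ Set.Icc (α j) (β j)})
    (f : (Fin d → ℝ) → ℝ)
    (hf : ∀ x ∈ U, ∀ s t : ℝ, α k ≤ s → s ≤ t → t ≤ β k →
      f (Function.update x k s) ≤ f (Function.update x k t))
    (F : Set (Fin d → ℝ)) (hF : F = {x ∈ U | x k = α k})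
    (hface : ∀ x ∈ F ∩ {y | f y < 0}, ∀ y ∈ F ∩ {y | f y < 0},
      JoinedIn (F ∩ {z | f z < 0}) x y) :
    ∀ x ∈ U ∩ {y | f y < 0}, ∀ y ∈ U ∩ {y | f y < 0},
      JoinedIn (U ∩ {z | f z < 0}) x y := by
  -- key: any point of U ∩ {f < 0} is joined to its projection on the lower face
  have key : ∀ x ∈ U ∩ {y | f y < 0},
      JoinedIn (U ∩ {z | f z < 0}) x (Function.update x k (α k)) ∧
      Function.update x k (α k) ∈ F ∩ {y | f y < 0} := by
    intro x hx
    obtain ⟨hxU, hxf⟩ := hx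
    have hxbox := hU ▸ hxU
    have hαx : α k ≤ x k := (hxbox k).1
    have hxβ : x k ≤ β k := (hxbox k).2
    -- any point with k-th coordinate between α k and x k is in U ∩ {f < 0}
    have hmem : ∀ v : ℝ, α k ≤ v → v ≤ x k →
        Function.update x k v ∈ U ∩ {z | f z < 0} := by
      intro v hv1 hv2
      have hvU : Function.update x k v ∈ U := by
        rw [hU]
        intro j
        by_cases hj : j = k
        · subst hj
          simp [Function.update_self]
          exact ⟨hv1, le_trans hv2 hxβ⟩
        · simp [Function.update_of_ne hj]
          exact hxbox j
      refine ⟨hvU, ?_⟩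
      have := hf x hxU v (x k) hv1 hv2 hxβ
      rw [Function.update_eq_self] at this
      exact lt_of_le_of_lt this hxf
    constructor
    · -- the vertical path
      have hc : Continuous fun t : unitInterval => (1 - (t : ℝ)) * x k + (t : ℝ) * α k :=
        ((continuous_const.sub continuous_subtype_val).mul continuous_const).add
          (continuous_subtype_val.mul continuous_const)
      have hcont : Continuous fun t : unitInterval =>
          Function.update x k ((1 - (t : ℝ)) * x k + (t : ℝ) * α k) :=
        continuous_const.update k hc
      let γ : Path x (Function.update x k (α k)) :=
        { toFun := fun t => Function.update x k ((1 - (t : ℝ)) * x k + (t : ℝ) * α k)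
          continuous_toFun := hcont
          source' := by
            show Function.update x k ((1 - ((0:unitInterval) : ℝ)) * x k + _ * α k) = x
            norm_num
          target' := by
            show Function.update x k ((1 - ((1:unitInterval) : ℝ)) * x k + _ * α k) = _
            norm_num }
      refine ⟨γ, ?_⟩
      intro t
      have ht0 : (0 : ℝ) ≤ (t : ℝ) := t.2.1
      have ht1 : (t : ℝ) ≤ 1 := t.2.2
      apply hmem
      · nlinarith
      · nlinarith
    · refine ⟨?_, (hmem (α k) le_rfl hαx).2⟩
      rw [hF]
      exact ⟨(hmem (α k) le_rfl hαx).1, Function.update_self k (α k) x⟩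
  intro x hx y hy
  obtain ⟨hxpath, hxF⟩ := key x hx
  obtain ⟨hypath, hyF⟩ := key y hy
  have hsub : F ∩ {z | f z < 0} ⊆ U ∩ {z | f z < 0} := by
    rw [hF]; exact Set.inter_subset_inter_left _ (Set.sep_subset _ _)
  exact (hxpath.trans ((hface _ hxF _ hyF).mono hsub)).trans hypath.symm
end

section
/- Let Ω be a topological space and let K_1, …, K_m be subsets of Ω such that Ω = K_1 ∪ ⋯ ∪ K_m, each K_i is closed in Ω, and each nonempty K_i is path-connected. Then for any two points x, y ∈ Ω, the following are equivalent: (a) x and y are joined by a path in Ω; (b) there exist indices i_0, i_1, …, i_r with x ∈ K_{i_0}, y ∈ K_{i_r}, and K_{i_s} ∩ K_{i_{s+1}} ≠ ∅ for every 0 ≤ s < r. (This is the topological core of the correctness of the connected component labeling algorithm: labels assigned by propagating through the intersection graph of the cells agree exactly with path components.) -/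
/-!
Call two cells adjacent when they meet. The union of the cells reachable from a cell containing
`x` in this adjacency graph is closed (a locally finite union of closed sets), and so is its
complement, the union of the remaining cells, because no unreachable cell meets a reachable one.
Being clopen, it contains every point joined to `x`. Conversely, consecutive cells of a chain
share a point and each cell is path-connected, so paths inside the cells concatenate along the
chain.
-/

open Set Relation

theorem Relation.reflTransGen_iff_exists_fin {α : Type*} {r : α → α → Prop} {a b : α} :
    ReflTransGen r a b ↔ ∃ (n : ℕ) (f : Fin (n + 1) → α),
      f 0 = a ∧ f (Fin.last n) = b ∧ ∀ i : Fin n, r (f i.castSucc) (f i.succ) := by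
  constructor
  · intro h
    induction h using ReflTransGen.head_induction_on with
    | refl => exact ⟨0, fun _ ↦ b, rfl, rfl, Fin.elim0⟩
    | head hac _ ih =>
      obtain ⟨n, f, rfl, hlast, hstep⟩ := ih
      refine ⟨n + 1, Fin.cons _ f, rfl, by rwa [← Fin.succ_last, Fin.cons_succ], ?_⟩
      intro i
      induction i using Fin.cases with
      | zero => simpa using hac
      | succ i => simpa [← Fin.succ_castSucc] using hstep i
  · rintro ⟨n, f, rfl, rfl, hstep⟩
    induction Fin.last n using Fin.induction with
    | zero => exact .refl
    | succ i ih => exact ih.tail (hstep i)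

section Cells

variable {X ι : Type*} [TopologicalSpace X] {K : ι → Set X}

theorem joined_of_reflTransGen_inter_nonempty
    (hK : ∀ i, (K i).Nonempty → IsPathConnected (K i)) {i j : ι}
    (hij : ReflTransGen (fun i j ↦ (K i ∩ K j).Nonempty) i j) {x y : X}
    (hx : x ∈ K i) (hy : y ∈ K j) : Joined x y := by
  induction hij generalizing y with
  | refl => exact ((hK i ⟨x, hx⟩).joinedIn x hx y hy).joined
  | @tail k l _ hkl ih =>
    obtain ⟨z, hzk, hzl⟩ := hkl
    exact (ih hzk).trans ((hK l ⟨z, hzl⟩).joinedIn z hzl y hy).joined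

theorem isClopen_biUnion_of_inter_nonempty (hf : LocallyFinite K) (hc : ∀ i, IsClosed (K i))
    (hcov : ⋃ i, K i = univ) {R : Set ι}
    (hR : ∀ i ∈ R, ∀ j, (K i ∩ K j).Nonempty → j ∈ R) : IsClopen (⋃ i ∈ R, K i) := by
  have hclosed : ∀ R : Set ι, IsClosed (⋃ i ∈ R, K i) := fun R ↦ by
    rw [biUnion_eq_iUnion]
    exact (hf.comp_injective Subtype.val_injective).isClosed_iUnion fun i ↦ hc i
  have hcompl : (⋃ i ∈ R, K i)ᶜ = ⋃ j ∈ Rᶜ, K j := by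
    ext x
    obtain ⟨j, hxj⟩ := iUnion_eq_univ_iff.1 hcov x
    simp only [mem_compl_iff, mem_iUnion, exists_prop, not_exists, not_and]
    exact ⟨fun hx ↦ ⟨j, fun hj ↦ hx j hj hxj, hxj⟩,
      fun ⟨j, hj, hxj⟩ i hi hxi ↦ hj (hR i hi j ⟨x, hxi, hxj⟩)⟩
  exact ⟨hclosed R, isClosed_compl_iff.1 (hcompl ▸ hclosed Rᶜ)⟩

theorem exists_reflTransGen_inter_nonempty_of_joined (hf : LocallyFinite K)
    (hc : ∀ i, IsClosed (K i)) (hcov : ⋃ i, K i = univ) {i : ι} {x y : X} (hx : x ∈ K i)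
    (hxy : Joined x y) :
    ∃ j, y ∈ K j ∧ ReflTransGen (fun i j ↦ (K i ∩ K j).Nonempty) i j := by
  have hclopen := isClopen_biUnion_of_inter_nonempty hf hc hcov
    (R := {j | ReflTransGen (fun i j ↦ (K i ∩ K j).Nonempty) i j}) fun _ hj _ hmeet ↦ hj.tail hmeet
  have hy := hclopen.connectedComponent_subset (mem_biUnion ReflTransGen.refl hx)
    (pathComponent_subset_component x hxy)
  simpa only [mem_iUnion, exists_prop, mem_ofPred_eq, and_comm] using hy

end Cells

/-- Topological core of the correctness of the connected component labeling algorithm: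
if a space is covered by finitely many closed cells, each of which is path-connected when
nonempty, then two points are joined by a path if and only if they are linked through a
finite chain of cells in which consecutive cells intersect. -/
theorem labeling_correctness (Ω : Type*) [TopologicalSpace Ω]
    (m : ℕ) (K : Fin m → Set Ω)
    (hcov : (⋃ i, K i) = Set.univ)
    (hclosed : ∀ i, IsClosed (K i))
    (hpc : ∀ i, (K i).Nonempty → IsPathConnected (K i)) :
    ∀ x y : Ω,
      Joined x y ↔
        ∃ (r : ℕ) (idx : Fin (r + 1) → Fin m),
          x ∈ K (idx 0) ∧ y ∈ K (idx (Fin.last r)) ∧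
            ∀ s : Fin r, (K (idx s.castSucc) ∩ K (idx s.succ)).Nonempty := by
  intro x y
  constructor
  · intro hxy
    obtain ⟨i, hxi⟩ := iUnion_eq_univ_iff.1 hcov x
    obtain ⟨j, hyj, hij⟩ := exists_reflTransGen_inter_nonempty_of_joined
      (locallyFinite_of_finite K) hclosed hcov hxi hxy
    obtain ⟨r, idx, rfl, rfl, hstep⟩ := reflTransGen_iff_exists_fin.1 hij
    exact ⟨r, idx, hxi, hyj, hstep⟩
  · rintro ⟨r, idx, hx, hy, hstep⟩
    exact joined_of_reflTransGen_inter_nonempty hpc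
      (reflTransGen_iff_exists_fin.2 ⟨r, idx, rfl, rfl, hstep⟩) hx hy
end
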